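/- arXiv:1705.10502 — 2 statements merged into one kernel-verified Lean document; each statement's English description precedes it below -/
import Mathlib

section
/- Let C(U), C(X), C(Z) be pretriangulated categories related by gluing and equipped with weight structures compatible with the gluing, and let a : C(X) → D be a weight-exact exact functor to a pretriangulated category with weight structure. Let M_U ∈ C(U)_{w=0,∂w≠0,1}, and let M ∈ C(X)_{w=0,i^*w≤−1,i^!w≥1} satisfy j^* M ≅ M_U (i.e. M = j_{!*} M_U). Then a(j_! M_U) belongs to D_{w≤0,≠−1}, a(j_* M_U) belongs to D_{w≥0,≠1}, and there are canonical isomorphisms Gr_0(a(j_! M_U)) ≅ a(M) and a(M) ≅ Gr_0(a(j_* M_U)) whose composition equals Gr_0(a(m)), where m : j_! M_U → j_* M_U is the canonical morphism; in particular Gr_0(a(m)) is an isomorphism, and every endomorphism of a(j_! M_U) or of a(j_* M_U) induces, via Gr_0 and these isomorphisms, an endomorphism of a(M). (Theorem 2G (c) and Theorem 2H, abstract form.) -/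
set_option linter.unusedVariables false

open CategoryTheory Limits Pretriangulated

universe w₁ w₂ w₃ w₄ v₁ v₂ v₃ v₄ u₁ u₂ u₃ u₄

/-- A weight structure on a pretriangulated category `C`: a pair of classes of objects
`(C_{w≤0}, C_{w≥0})`, each containing the zero objects and closed under isomorphisms and
retracts (direct summands), such that `C_{w≤0}[-1] ⊆ C_{w≤0}`, `C_{w≥0}[1] ⊆ C_{w≥0}`,
`Hom(A, B[1]) = 0` for `A ∈ C_{w≤0}`, `B ∈ C_{w≥0}`, and every object admits a weight
filtration. -/
structure WeightStructure (C : Type*) [Category C] [HasZeroObject C] [Preadditive C]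
    [HasShift C ℤ] [∀ n : ℤ, (shiftFunctor C n).Additive] [Pretriangulated C] where
  le : C → Prop
  ge : C → Prop
  le_zero : ∀ X : C, IsZero X → le X
  ge_zero : ∀ X : C, IsZero X → ge X
  le_iso : ∀ {X Y : C}, (X ≅ Y) → le X → le Y
  ge_iso : ∀ {X Y : C}, (X ≅ Y) → ge X → ge Y
  le_retract : ∀ {X Y : C} (s : X ⟶ Y) (r : Y ⟶ X), s ≫ r = 𝟙 X → le Y → le X
  ge_retract : ∀ {X Y : C} (s : X ⟶ Y) (r : Y ⟶ X), s ≫ r = 𝟙 X → ge Y → ge X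
  le_shift : ∀ X : C, le X → le (X⟦(-1 : ℤ)⟧)
  ge_shift : ∀ X : C, ge X → ge (X⟦(1 : ℤ)⟧)
  orth : ∀ {A B : C} (f : A ⟶ B⟦(1 : ℤ)⟧), le A → ge B → f = 0
  exists_weight_filtration : ∀ M : C, ∃ (A B : C) (f : A ⟶ M) (g : M ⟶ B)
    (h : B ⟶ A⟦(1 : ℤ)⟧), (Triangle.mk f g h ∈ distTriang C) ∧ le A ∧ ge (B⟦(-1 : ℤ)⟧)

namespace WeightStructure

variable {C : Type*} [Category C] [HasZeroObject C] [Preadditive C]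
    [HasShift C ℤ] [∀ n : ℤ, (shiftFunctor C n).Additive] [Pretriangulated C]

/-- `X ∈ C_{w ≤ n}`, i.e. `X[-n] ∈ C_{w ≤ 0}`. -/
def leW (w : WeightStructure C) (n : ℤ) (X : C) : Prop := w.le (X⟦(-n : ℤ)⟧)

/-- `X ∈ C_{w ≥ n}`, i.e. `X[-n] ∈ C_{w ≥ 0}`. -/
def geW (w : WeightStructure C) (n : ℤ) (X : C) : Prop := w.ge (X⟦(-n : ℤ)⟧)

/-- The heart `C_{w = 0}`. -/
def heart (w : WeightStructure C) (X : C) : Prop := w.le X ∧ w.ge X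

/-- `M` is without weights `m, …, n`: there is a distinguished triangle
`M_{≤ m-1} → M → M_{≥ n+1} → M_{≤ m-1}[1]` with `M_{≤ m-1} ∈ C_{w ≤ m-1}` and
`M_{≥ n+1} ∈ C_{w ≥ n+1}` (a weight filtration avoiding weights `m, …, n`). -/
def WithoutWeights (w : WeightStructure C) (m n : ℤ) (M : C) : Prop :=
  ∃ (A B : C) (f : A ⟶ M) (g : M ⟶ B) (h : B ⟶ A⟦(1 : ℤ)⟧),
    (Triangle.mk f g h ∈ distTriang C) ∧ w.leW (m - 1) A ∧ w.geW (n + 1) B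

end WeightStructure

/-- A weight-exact (exact) functor between pretriangulated categories equipped with
weight structures: `F(C_{w≤0}) ⊆ D_{w≤0}` and `F(C_{w≥0}) ⊆ D_{w≥0}`. -/
def WeightExact {C : Type*} [Category C] [HasZeroObject C] [Preadditive C]
    [HasShift C ℤ] [∀ n : ℤ, (shiftFunctor C n).Additive] [Pretriangulated C]
    {D : Type*} [Category D] [HasZeroObject D] [Preadditive D]
    [HasShift D ℤ] [∀ n : ℤ, (shiftFunctor D n).Additive] [Pretriangulated D]
    (wC : WeightStructure C) (wD : WeightStructure D) (F : C ⥤ D) : Prop :=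
  (∀ X : C, wC.le X → wD.le (F.obj X)) ∧ (∀ X : C, wC.ge X → wD.ge (F.obj X))

variable {CU : Type*} [Category CU] [HasZeroObject CU] [Preadditive CU]
  [HasShift CU ℤ] [∀ n : ℤ, (shiftFunctor CU n).Additive] [Pretriangulated CU]
variable {CX : Type*} [Category CX] [HasZeroObject CX] [Preadditive CX]
  [HasShift CX ℤ] [∀ n : ℤ, (shiftFunctor CX n).Additive] [Pretriangulated CX]
variable {CZ : Type*} [Category CZ] [HasZeroObject CZ] [Preadditive CZ]
  [HasShift CZ ℤ] [∀ n : ℤ, (shiftFunctor CZ n).Additive] [Pretriangulated CZ]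

/- The six gluing functors: `jl = j_!`, `js = j^*`, `jr = j_*`,
   `il = i^*`, `im = i_*`, `ir = i^!`; all of them are exact. -/
variable (jl : CU ⥤ CX) (js : CX ⥤ CU) (jr : CU ⥤ CX)
  (il : CX ⥤ CZ) (im : CZ ⥤ CX) (ir : CX ⥤ CZ)
  [jl.CommShift ℤ] [jl.IsTriangulated] [js.CommShift ℤ] [js.IsTriangulated]
  [jr.CommShift ℤ] [jr.IsTriangulated] [il.CommShift ℤ] [il.IsTriangulated]
  [im.CommShift ℤ] [im.IsTriangulated] [ir.CommShift ℤ] [ir.IsTriangulated]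
  [im.Full] [im.Faithful]
variable (adj₁ : jl ⊣ js) (adj₂ : js ⊣ jr) (adj₃ : il ⊣ im) (adj₄ : im ⊣ ir)

/-- The axioms of a gluing ("recollement") situation relating `C(U)`, `C(X)` and `C(Z)`:
`j^* ∘ i_* = 0`, the unit `id → j^* j_!` and the counit `j^* j_* → id` are isomorphisms,
and the two localization triangles `j_! j^* M → M → i_* i^* M → (j_! j^* M)[1]` and
`i_* i^! M → M → j_* j^* M → (i_* i^! M)[1]` are distinguished.
(Full faithfulness of `i_*` is part of the ambient variable context.) -/
structure IsGluing : Prop where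
  js_im_zero : ∀ Z : CZ, IsZero (js.obj (im.obj Z))
  unit_iso : IsIso adj₁.unit
  counit_iso : IsIso adj₂.counit
  tri₁ : ∀ M : CX, ∃ δ : im.obj (il.obj M) ⟶ (jl.obj (js.obj M))⟦(1 : ℤ)⟧,
    Triangle.mk (adj₁.counit.app M) (adj₃.unit.app M) δ ∈ distTriang CX
  tri₂ : ∀ M : CX, ∃ δ : jr.obj (js.obj M) ⟶ (im.obj (ir.obj M))⟦(1 : ℤ)⟧,
    Triangle.mk (adj₄.counit.app M) (adj₂.unit.app M) δ ∈ distTriang CX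

variable (wU : WeightStructure CU) (wX : WeightStructure CX) (wZ : WeightStructure CZ)

/-- Compatibility of the weight structures on `C(U)`, `C(X)`, `C(Z)` with the gluing:
the left adjoints `j_!`, `j^*`, `i^*`, `i_*` respect `(w ≤ 0)`, and the right adjoints
`j^*`, `j_*`, `i_*`, `i^!` respect `(w ≥ 0)`. -/
structure GluedWeights : Prop where
  jl_le : ∀ X : CU, wU.le X → wX.le (jl.obj X)
  js_le : ∀ X : CX, wX.le X → wU.le (js.obj X)
  js_ge : ∀ X : CX, wX.ge X → wU.ge (js.obj X)
  il_le : ∀ X : CX, wX.le X → wZ.le (il.obj X)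
  im_le : ∀ X : CZ, wZ.le X → wX.le (im.obj X)
  im_ge : ∀ X : CZ, wZ.ge X → wX.ge (im.obj X)
  jr_ge : ∀ X : CU, wU.ge X → wX.ge (jr.obj X)
  ir_ge : ∀ X : CX, wX.ge X → wZ.ge (ir.obj X)

/-!
In the localization triangles `j_! M_U ⟶ M ⟶ i_* i^* M` and `i_* i^! M ⟶ M ⟶ j_* M_U` the
third, resp. first, term has weights `≤ -1`, resp. `≥ 1`, by the assumptions on `i^* M` and
`i^! M`. After applying `a`, orthogonality against weight `0` makes `a(j_! M_U) ⟶ a(M)` the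
universal morphism to the heart and `a(M) ⟶ a(j_* M_U)` the universal morphism from it, and the
rotated triangles are weight filtrations of `a(j_! M_U)` and `a(j_* M_U)` avoiding weights `-1`
and `1`.
-/
namespace CategoryTheory

lemma Adjunction.homEquiv_comp_homEquiv_comp_counit {A B : Type*} [Category A] [Category B]
    {L : A ⥤ B} {F : B ⥤ A} {R : A ⥤ B} (adj₁ : L ⊣ F) (adj₂ : F ⊣ R) {X : A} {Y : B}
    (e : F.obj Y ≅ X) :
    adj₁.homEquiv X (R.obj X) ((adj₁.homEquiv X Y).symm e.inv ≫ adj₂.homEquiv Y X e.hom) ≫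
      adj₂.counit.app X = 𝟙 X := by
  simp [Adjunction.homEquiv_unit, Adjunction.homEquiv_counit]

variable {C : Type*} [Category C] [HasZeroObject C] [Preadditive C]
    [HasShift C ℤ] [∀ n : ℤ, (shiftFunctor C n).Additive] [Pretriangulated C]
    {T : Triangle C} (hT : T ∈ distTriang C) {N : C}
include hT

lemma Pretriangulated.existsUnique_mor₁_comp_eq (h₃ : ∀ χ : T.obj₃ ⟶ N, χ = 0)
    (h₃' : ∀ χ : T.obj₃⟦(-1 : ℤ)⟧ ⟶ N, χ = 0) (φ : T.obj₁ ⟶ N) :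
    ∃! ψ : T.obj₂ ⟶ N, T.mor₁ ≫ ψ = φ := by
  obtain ⟨ψ, hψ⟩ : ∃ ψ : T.obj₂ ⟶ N, φ = T.mor₁ ≫ ψ :=
    Triangle.yoneda_exact₂ _ (inv_rot_of_distTriang _ hT) φ (h₃' _)
  refine ⟨ψ, hψ.symm, fun ψ' hψ' => ?_⟩
  obtain ⟨χ, hχ⟩ := Triangle.yoneda_exact₂ _ hT (ψ' - ψ) (by
    rw [Preadditive.comp_sub, hψ', ← hψ, sub_self])
  rw [← sub_eq_zero, hχ, h₃ χ, comp_zero]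

lemma Pretriangulated.existsUnique_comp_mor₂_eq (h₁ : ∀ χ : N ⟶ T.obj₁, χ = 0)
    (h₁' : ∀ χ : N ⟶ T.obj₁⟦(1 : ℤ)⟧, χ = 0) (φ : N ⟶ T.obj₃) :
    ∃! ψ : N ⟶ T.obj₂, ψ ≫ T.mor₂ = φ := by
  obtain ⟨ψ, hψ⟩ := Triangle.coyoneda_exact₃ _ hT φ (h₁' _)
  refine ⟨ψ, hψ.symm, fun ψ' hψ' => ?_⟩
  obtain ⟨χ, hχ⟩ := Triangle.coyoneda_exact₂ _ hT (ψ' - ψ) (by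
    rw [Preadditive.sub_comp, hψ', ← hψ, sub_self])
  rw [← sub_eq_zero, hχ, h₁ χ, zero_comp]

end CategoryTheory

namespace WeightStructure

variable {C : Type*} [Category C] [HasZeroObject C] [Preadditive C]
    [HasShift C ℤ] [∀ n : ℤ, (shiftFunctor C n).Additive] [Pretriangulated C]
    (w : WeightStructure C)

lemma leW_iff_le {n : ℤ} (hn : n = 0) {X : C} : w.leW n X ↔ w.le X := by
  subst hn
  exact ⟨w.le_iso ((shiftFunctorZero' C (-0 : ℤ) neg_zero).app X),
    w.le_iso ((shiftFunctorZero' C (-0 : ℤ) neg_zero).app X).symm⟩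

lemma geW_iff_ge {n : ℤ} (hn : n = 0) {X : C} : w.geW n X ↔ w.ge X := by
  subst hn
  exact ⟨w.ge_iso ((shiftFunctorZero' C (-0 : ℤ) neg_zero).app X),
    w.ge_iso ((shiftFunctorZero' C (-0 : ℤ) neg_zero).app X).symm⟩

lemma leW_shift {m : ℤ} {X : C} (hX : w.leW m X) (k n : ℤ) (h : m + k = n) :
    w.leW n (X⟦k⟧) :=
  w.le_iso ((shiftFunctorAdd' C k (-n) (-m) (by omega)).app X) hX

lemma geW_shift {m : ℤ} {X : C} (hX : w.geW m X) (k n : ℤ) (h : m + k = n) :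
    w.geW n (X⟦k⟧) :=
  w.ge_iso ((shiftFunctorAdd' C k (-n) (-m) (by omega)).app X) hX

lemma geW_anti {m n : ℤ} (hmn : m ≤ n) {X : C} (hX : w.geW n X) : w.geW m X :=
  Int.leInductionDown (motive := fun k _ => w.geW k X) hX
    (fun k _ hk => w.ge_iso ((shiftFunctorAdd' C (-k) 1 (-(k - 1)) (by ring)).app X).symm
      (w.ge_shift _ hk)) m hmn

lemma hom_eq_zero_of_leW_of_geW {m n : ℤ} (hmn : m < n) {A B : C} (hA : w.leW m A)
    (hB : w.geW n B) (φ : A ⟶ B) : φ = 0 := by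
  let e := (shiftFunctorAdd' C (-(m + 1)) 1 (-m) (by ring)).app B
  have hφ : φ⟦-m⟧' ≫ e.hom = 0 := w.orth _ hA (w.geW_anti (by omega) hB)
  apply (shiftFunctor C (-m)).map_injective
  rw [← cancel_mono e.hom, hφ, Functor.map_zero, zero_comp]

lemma existsUnique_mor₁_comp_eq {T : Triangle C} (hT : T ∈ distTriang C)
    (h₃ : w.leW (-1) T.obj₃) {N : C} (hN : w.ge N) (φ : T.obj₁ ⟶ N) :
    ∃! ψ : T.obj₂ ⟶ N, T.mor₁ ≫ ψ = φ :=
  Pretriangulated.existsUnique_mor₁_comp_eq hT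
    (w.hom_eq_zero_of_leW_of_geW (by norm_num) h₃ ((w.geW_iff_ge rfl).2 hN))
    (w.hom_eq_zero_of_leW_of_geW (n := 0) (by norm_num) (w.leW_shift h₃ (-1) (-2) rfl)
      ((w.geW_iff_ge rfl).2 hN)) φ

lemma existsUnique_comp_mor₂_eq {T : Triangle C} (hT : T ∈ distTriang C)
    (h₁ : w.geW 1 T.obj₁) {N : C} (hN : w.le N) (φ : N ⟶ T.obj₃) :
    ∃! ψ : N ⟶ T.obj₂, ψ ≫ T.mor₂ = φ :=
  Pretriangulated.existsUnique_comp_mor₂_eq hT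
    (w.hom_eq_zero_of_leW_of_geW (by norm_num) ((w.leW_iff_le rfl).2 hN) h₁)
    (w.hom_eq_zero_of_leW_of_geW (m := 0) (by norm_num) ((w.leW_iff_le rfl).2 hN)
      (w.geW_shift h₁ 1 2 rfl)) φ

lemma withoutWeights_neg_one_of_distinguished {T : Triangle C} (hT : T ∈ distTriang C)
    (h₂ : w.ge T.obj₂) (h₃ : w.leW (-1) T.obj₃) : w.WithoutWeights (-1) (-1) T.obj₁ :=
  ⟨_, _, _, _, _, inv_rot_of_distTriang _ hT, w.leW_shift h₃ (-1) _ (by norm_num),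
    (w.geW_iff_ge (by norm_num)).2 h₂⟩

lemma withoutWeights_one_of_distinguished {T : Triangle C} (hT : T ∈ distTriang C)
    (h₁ : w.geW 1 T.obj₁) (h₂ : w.le T.obj₂) : w.WithoutWeights 1 1 T.obj₃ :=
  ⟨_, _, _, _, _, rot_of_distTriang _ hT, (w.leW_iff_le (by norm_num)).2 h₂,
    w.geW_shift h₁ 1 _ (by norm_num)⟩

variable {D : Type*} [Category D] [HasZeroObject D] [Preadditive D]
    [HasShift D ℤ] [∀ n : ℤ, (shiftFunctor D n).Additive] [Pretriangulated D]
    {w} {w' : WeightStructure D} (F : C ⥤ D) [F.CommShift ℤ]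

lemma leW_map (hF : ∀ X, w.le X → w'.le (F.obj X)) {n : ℤ} {X : C} (hX : w.leW n X) :
    w'.leW n (F.obj X) :=
  w'.le_iso ((F.commShiftIso (-n)).app X) (hF _ hX)

lemma geW_map (hF : ∀ X, w.ge X → w'.ge (F.obj X)) {n : ℤ} {X : C} (hX : w.geW n X) :
    w'.geW n (F.obj X) :=
  w'.ge_iso ((F.commShiftIso (-n)).app X) (hF _ hX)

end WeightStructure

namespace IsGluing

variable {jl js jr il im ir adj₁ adj₂ adj₃ adj₄}
variable (hglue : IsGluing jl js jr il im ir adj₁ adj₂ adj₃ adj₄) {M : CX} {MU : CU}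
  (e : js.obj M ≅ MU)
include hglue

lemma exists_distinguished_homEquiv_symm :
    ∃ δ, Triangle.mk ((adj₁.homEquiv MU M).symm e.inv) (adj₃.unit.app M) δ ∈ distTriang CX := by
  obtain ⟨δ, hδ⟩ := hglue.tri₁ M
  refine ⟨δ ≫ (jl.map e.hom)⟦(1 : ℤ)⟧', isomorphic_distinguished _ hδ _ ?_⟩
  refine Triangle.isoMk _ _ (jl.mapIso e).symm (Iso.refl _) (Iso.refl _) ?_ ?_ ?_ <;>
    dsimp only [Triangle.mk] <;> simp [Adjunction.homEquiv_counit, ← Functor.map_comp]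

lemma exists_distinguished_homEquiv :
    ∃ δ, Triangle.mk (adj₄.counit.app M) ((adj₂.homEquiv M MU) e.hom) δ ∈ distTriang CX := by
  obtain ⟨δ, hδ⟩ := hglue.tri₂ M
  refine ⟨jr.map e.inv ≫ δ, isomorphic_distinguished _ hδ _ ?_⟩
  refine Triangle.isoMk _ _ (Iso.refl _) (Iso.refl _) (jr.mapIso e).symm ?_ ?_ ?_ <;>
    dsimp only [Triangle.mk] <;> simp [Adjunction.homEquiv_unit, ← Functor.map_comp]

end IsGluing

/-- **Theorem 2G (c) and Theorem 2H, abstract form.** Let `M_U ∈ C(U)_{w=0, ∂w ≠ 0,1}`,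
let `M = j_{!*} M_U` (i.e. `M ∈ C(X)_{w=0, i^*w ≤ -1, i^!w ≥ 1}` with an isomorphism
`e : j^* M ≅ M_U`), and let `a : C(X) → D` be weight-exact and exact. Write
`f : j_! M_U → M` and `g : M → j_* M_U` for the canonical morphisms (adjoint to `e.inv`
and `e.hom`); their composite is the canonical morphism `m : j_! M_U → j_* M_U`. Then
`a(j_! M_U) ∈ D_{w≤0, ≠-1}`, `a(j_* M_U) ∈ D_{w≥0, ≠1}`, `a(M)` lies in the heart of
`D`, `a(f)` exhibits `a(M)` as `Gr₀(a(j_! M_U))` and `a(g)` exhibits `a(M)` as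
`Gr₀(a(j_* M_U))` (universal properties), and every endomorphism of `a(j_! M_U)` or of
`a(j_* M_U)` induces a unique compatible endomorphism of `a(M)`. -/
theorem gr_zero_of_direct_images_and_functoriality
    (hglue : IsGluing jl js jr il im ir adj₁ adj₂ adj₃ adj₄)
    (hw : GluedWeights jl js jr il im ir wU wX wZ)
    {D : Type*} [Category D] [HasZeroObject D] [Preadditive D]
    [HasShift D ℤ] [∀ n : ℤ, (shiftFunctor D n).Additive] [Pretriangulated D]
    (wD : WeightStructure D)
    (a : CX ⥤ D) [a.CommShift ℤ] [a.IsTriangulated] (ha : WeightExact wX wD a)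
    (MU : CU) (hMU : wU.heart MU ∧ wZ.WithoutWeights 0 1 (il.obj (jr.obj MU)))
    (M : CX) (hM : wX.heart M ∧ wZ.leW (-1) (il.obj M) ∧ wZ.geW 1 (ir.obj M))
    (e : js.obj M ≅ MU) :
    -- the composite of the canonical maps `f` and `g` is the canonical morphism `m`
    (adj₁.homEquiv MU (jr.obj MU)
        (((adj₁.homEquiv MU M).symm e.inv) ≫ ((adj₂.homEquiv M MU) e.hom)) ≫
      adj₂.counit.app MU = 𝟙 MU) ∧
    -- `a(j_! M_U) ∈ D_{w≤0, ≠-1}`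
    (wD.le (a.obj (jl.obj MU)) ∧ wD.WithoutWeights (-1) (-1) (a.obj (jl.obj MU))) ∧
    -- `a(j_* M_U) ∈ D_{w≥0, ≠1}`
    (wD.ge (a.obj (jr.obj MU)) ∧ wD.WithoutWeights 1 1 (a.obj (jr.obj MU))) ∧
    -- `a(M)` is a Chow object, pure of weight zero
    wD.heart (a.obj M) ∧
    -- `a(f)` exhibits `a(M)` as `Gr₀(a(j_! M_U))`
    (∀ (N : D), wD.heart N → ∀ φ : a.obj (jl.obj MU) ⟶ N,
      ∃! ψ : a.obj M ⟶ N, a.map ((adj₁.homEquiv MU M).symm e.inv) ≫ ψ = φ) ∧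
    -- `a(g)` exhibits `a(M)` as `Gr₀(a(j_* M_U))`
    (∀ (N : D), wD.heart N → ∀ φ : N ⟶ a.obj (jr.obj MU),
      ∃! ψ : N ⟶ a.obj M, ψ ≫ a.map ((adj₂.homEquiv M MU) e.hom) = φ) ∧
    -- any endomorphism of `a(j_! M_U)` induces an endomorphism of `a(M)`
    (∀ φ : a.obj (jl.obj MU) ⟶ a.obj (jl.obj MU),
      ∃! ψ : a.obj M ⟶ a.obj M,
        a.map ((adj₁.homEquiv MU M).symm e.inv) ≫ ψ =
          φ ≫ a.map ((adj₁.homEquiv MU M).symm e.inv)) ∧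
    -- any endomorphism of `a(j_* M_U)` induces an endomorphism of `a(M)`
    (∀ φ : a.obj (jr.obj MU) ⟶ a.obj (jr.obj MU),
      ∃! ψ : a.obj M ⟶ a.obj M,
        ψ ≫ a.map ((adj₂.homEquiv M MU) e.hom) =
          a.map ((adj₂.homEquiv M MU) e.hom) ≫ φ) := by
  obtain ⟨hMU, -⟩ := hMU
  obtain ⟨hM, hMle, hMge⟩ := hM
  obtain ⟨δ₁, hT₁⟩ := hglue.exists_distinguished_homEquiv_symm e
  obtain ⟨δ₂, hT₂⟩ := hglue.exists_distinguished_homEquiv e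
  have haT₁ := a.map_distinguished _ hT₁
  have haT₂ := a.map_distinguished _ hT₂
  have hC₁ : wD.leW (-1) (a.obj (im.obj (il.obj M))) :=
    WeightStructure.leW_map a ha.1 (WeightStructure.leW_map im hw.im_le hMle)
  have hC₂ : wD.geW 1 (a.obj (im.obj (ir.obj M))) :=
    WeightStructure.geW_map a ha.2 (WeightStructure.geW_map im hw.im_ge hMge)
  have haM : wD.heart (a.obj M) := ⟨ha.1 _ hM.1, ha.2 _ hM.2⟩
  have univ_f := fun N (hN : wD.heart N) => wD.existsUnique_mor₁_comp_eq haT₁ hC₁ hN.2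
  have univ_g := fun N (hN : wD.heart N) => wD.existsUnique_comp_mor₂_eq haT₂ hC₂ hN.1
  exact ⟨Adjunction.homEquiv_comp_homEquiv_comp_counit adj₁ adj₂ e,
    ⟨ha.1 _ (hw.jl_le _ hMU.1), wD.withoutWeights_neg_one_of_distinguished haT₁ haM.2 hC₁⟩,
    ⟨ha.2 _ (hw.jr_ge _ hMU.2), wD.withoutWeights_one_of_distinguished haT₂ hC₂ haM.1⟩,
    haM, univ_f, univ_g, fun φ => univ_f _ haM (φ ≫ _), fun φ => univ_g _ haM (_ ≫ φ)⟩
end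

section
/- Let C and D be idempotent-complete pretriangulated categories with weight structures, and let g_* : C → D and g^* : D → C be weight-exact exact functors together with natural transformations η : id_C → g^* ∘ g_* and ε : g^* ∘ g_* → id_C satisfying ε ∘ η = id (so every object N of C is naturally a direct factor of g^* g_* N). Then g_* is weight-conservative: for every N ∈ C and all integers α ≤ β, (a) N lies in the heart C_{w=0} if and only if g_* N lies in the heart D_{w=0}; (b) N ∈ C_{w≤α} if and only if g_* N ∈ D_{w≤α}; (c) N ∈ C_{w≥β} if and only if g_* N ∈ D_{w≥β}; (d) N is without weights α, α+1, …, β if and only if g_* N is without weights α, α+1, …, β. (Proposition 2O, abstract form; the paper applies it with g a finite étale morphism of schemes, C, D the categories of constructible Beilinson motives, and g_*, g^* the direct and inverse image functors.) -/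
set_option linter.unusedVariables false

open CategoryTheory Limits Pretriangulated

universe w₁ w₂ w₃ w₄ v₁ v₂ v₃ v₄ u₁ u₂ u₃ u₄

/-!
`N` is a retract of `g^* g_* N`, and each of the four weight conditions is preserved by
weight-exact triangulated functors and inherited by retracts; this gives all four
equivalences. Only the last inheritance needs work. If `N` is a retract of `M`, with
idempotent `e` on `M`, and `A → M → B` avoids weights `m, …, n`, the orthogonality
`Hom(C_{w≤m}, C_{w≥n+1}) = 0` lifts `e` to an idempotent on `A`. Splitting it gives a retract
`A₁` of `A` and a map `A₁ → N`, whose cone is, by the five lemma for triangles, a retract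
of `B`.
-/

namespace CategoryTheory.Pretriangulated

variable {C : Type*} [Category C] [HasZeroObject C] [Preadditive C]
    [HasShift C ℤ] [∀ n : ℤ, (shiftFunctor C n).Additive] [Pretriangulated C]

lemma nonempty_retract_obj₃ {T T' : Triangle C} (hT : T ∈ distTriang C)
    (hT' : T' ∈ distTriang C) (h₁ : Retract T.obj₁ T'.obj₁) (h₂ : Retract T.obj₂ T'.obj₂)
    (comm_i : T.mor₁ ≫ h₂.i = h₁.i ≫ T'.mor₁) (comm_r : T'.mor₁ ≫ h₂.r = h₁.r ≫ T.mor₁) :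
    Nonempty (Retract T.obj₃ T'.obj₃) := by
  obtain ⟨c, hc₂, hc₃⟩ := complete_distinguished_triangle_morphism T T' hT hT' _ _ comm_i
  obtain ⟨d, hd₂, hd₃⟩ := complete_distinguished_triangle_morphism T' T hT' hT _ _ comm_r
  let φ : T ⟶ T := Triangle.homMk _ _ _ _ _ comm_i hc₂ hc₃ ≫
    Triangle.homMk _ _ _ _ _ comm_r hd₂ hd₃
  have : IsIso (c ≫ d) := isIso₃_of_isIso₁₂ φ hT hT
    (by rw [show φ.hom₁ = 𝟙 _ from h₁.retract]; infer_instance)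
    (by rw [show φ.hom₂ = 𝟙 _ from h₂.retract]; infer_instance)
  exact ⟨⟨c, d ≫ inv (c ≫ d), by rw [← Category.assoc, IsIso.hom_inv_id]⟩⟩

end CategoryTheory.Pretriangulated

namespace WeightStructure

variable {C : Type*} [Category C] [HasZeroObject C] [Preadditive C]
    [HasShift C ℤ] [∀ n : ℤ, (shiftFunctor C n).Additive] [Pretriangulated C]
    (w : WeightStructure C)

lemma le_shift_neg_nat (k : ℕ) {X : C} (h : w.le X) : w.le (X⟦-(k : ℤ)⟧) := by
  induction k with
  | zero => exact w.le_iso ((shiftFunctorZero' C _ (by simp)).app X).symm h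
  | succ k ih =>
    exact w.le_iso ((shiftFunctorAdd' C (-(k : ℤ)) (-1) _ (by omega)).app X).symm
      (w.le_shift _ ih)

lemma leW_mono {a a' : ℤ} (haa' : a ≤ a') {X : C} (h : w.leW a X) : w.leW a' X := by
  obtain ⟨k, rfl⟩ := Int.le.dest haa'
  exact w.le_iso ((shiftFunctorAdd' C (-a) (-(k : ℤ)) _ (by omega)).app X).symm
    (w.le_shift_neg_nat k h)

lemma leW_shift_one {a : ℤ} {X : C} (h : w.leW a X) : w.leW (a + 1) (X⟦(1 : ℤ)⟧) :=
  w.le_iso ((shiftFunctorAdd' C (1 : ℤ) (-(a + 1)) (-a) (by omega)).app X) h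

lemma eq_zero_of_leW_of_geW {a b : ℤ} (hab : a < b) {X Y : C} (hX : w.leW a X)
    (hY : w.geW b Y) (f : X ⟶ Y) : f = 0 := by
  let e : Y⟦-(b - 1)⟧ ≅ (Y⟦-b⟧)⟦(1 : ℤ)⟧ := (shiftFunctorAdd' C (-b) 1 _ (by omega)).app Y
  have hf : f⟦-(b - 1)⟧' ≫ e.hom = 0 := w.orth _ (w.leW_mono (by omega) hX) hY
  rw [← (shiftFunctor C (-(b - 1))).map_eq_zero_iff, ← cancel_mono e.hom, hf, zero_comp]

lemma le_of_retract {X Y : C} (h : Retract X Y) (hY : w.le Y) : w.le X :=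
  w.le_retract h.i h.r h.retract hY

lemma ge_of_retract {X Y : C} (h : Retract X Y) (hY : w.ge Y) : w.ge X :=
  w.ge_retract h.i h.r h.retract hY

lemma heart_of_retract {X Y : C} (h : Retract X Y) (hY : w.heart Y) : w.heart X :=
  ⟨w.le_of_retract h hY.1, w.ge_of_retract h hY.2⟩

lemma leW_of_retract {a : ℤ} {X Y : C} (h : Retract X Y) (hY : w.leW a Y) : w.leW a X :=
  w.le_of_retract (h.map (shiftFunctor C (-a))) hY

lemma geW_of_retract {b : ℤ} {X Y : C} (h : Retract X Y) (hY : w.geW b Y) : w.geW b X :=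
  w.ge_of_retract (h.map (shiftFunctor C (-b))) hY

variable {w}

lemma exists_lift_mor₁ {T : Triangle C} (hT : T ∈ distTriang C) {a b : ℤ} (hab : a < b)
    (hA : w.leW a T.obj₁) (hB : w.geW b T.obj₃) (e : T.obj₂ ⟶ T.obj₂) :
    ∃ e' : T.obj₁ ⟶ T.obj₁, e' ≫ T.mor₁ = T.mor₁ ≫ e := by
  obtain ⟨e', he'⟩ := Triangle.coyoneda_exact₂ T hT (T.mor₁ ≫ e)
    (w.eq_zero_of_leW_of_geW hab hA hB _)
  exact ⟨e', he'.symm⟩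

lemma eq_zero_of_comp_mor₁_eq_zero {T : Triangle C} (hT : T ∈ distTriang C) {a b : ℤ}
    (hab : a + 1 < b) (hB : w.geW b T.obj₃) {X : C} (hX : w.leW a X) (u : X ⟶ T.obj₁)
    (hu : u ≫ T.mor₁ = 0) : u = 0 := by
  obtain ⟨τ, hτ⟩ := Triangle.coyoneda_exact₁ T hT (u⟦(1 : ℤ)⟧')
    (by rw [← Functor.map_comp, hu, Functor.map_zero])
  rw [← (shiftFunctor C (1 : ℤ)).map_eq_zero_iff, hτ,
    w.eq_zero_of_leW_of_geW hab (w.leW_shift_one hX) hB τ, zero_comp]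

lemma exists_idempotent_lift_mor₁ {T : Triangle C} (hT : T ∈ distTriang C) {a b : ℤ}
    (hab : a + 1 < b) (hA : w.leW a T.obj₁) (hB : w.geW b T.obj₃) {e : T.obj₂ ⟶ T.obj₂}
    (he : e ≫ e = e) : ∃ e' : T.obj₁ ⟶ T.obj₁, e' ≫ e' = e' ∧ e' ≫ T.mor₁ = T.mor₁ ≫ e := by
  obtain ⟨e', he'⟩ := exists_lift_mor₁ hT (by omega) hA hB e
  refine ⟨e', sub_eq_zero.mp (eq_zero_of_comp_mor₁_eq_zero hT hab hB hA _ ?_), he'⟩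
  rw [Preadditive.sub_comp, Category.assoc, he', reassoc_of% he', he, sub_self]

lemma WithoutWeights.of_retract [IsIdempotentComplete C] {m n : ℤ} (hmn : m ≤ n)
    {N M : C} (h : Retract N M) (hM : w.WithoutWeights m n M) : w.WithoutWeights m n N := by
  obtain ⟨A, B, f, g, k, hT, hA, hB⟩ := hM
  have hri : (h.r ≫ h.i) ≫ h.r ≫ h.i = h.r ≫ h.i := by simp
  obtain ⟨e, he, hef⟩ : ∃ e : A ⟶ A, e ≫ e = e ∧ e ≫ f = f ≫ h.r ≫ h.i :=
    exists_idempotent_lift_mor₁ hT (by omega) hA hB hri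
  obtain ⟨A₁, ι, π, hιπ, hπι⟩ := IsIdempotentComplete.idempotents_split A e he
  let hA₁ : Retract A₁ A := ⟨ι, π, hιπ⟩
  obtain ⟨Z, g₁, k₁, hT₁⟩ := distinguished_cocone_triangle (ι ≫ f ≫ h.r)
  have hιe : ι ≫ e = ι := by rw [← hπι, reassoc_of% hιπ]
  have comm_i : (ι ≫ f ≫ h.r) ≫ h.i = ι ≫ f := by
    rw [Category.assoc, Category.assoc, ← hef, reassoc_of% hιe]
  have comm_r : f ≫ h.r = π ≫ ι ≫ f ≫ h.r := by
    rw [reassoc_of% hπι, reassoc_of% hef]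
    simp
  obtain ⟨hZ⟩ := nonempty_retract_obj₃ hT₁ hT hA₁ h comm_i comm_r
  exact ⟨A₁, Z, _, g₁, k₁, hT₁, w.leW_of_retract hA₁ hA, w.geW_of_retract hZ hB⟩

end WeightStructure

namespace WeightExact

variable {C : Type*} [Category C] [HasZeroObject C] [Preadditive C]
    [HasShift C ℤ] [∀ n : ℤ, (shiftFunctor C n).Additive] [Pretriangulated C]
    {D : Type*} [Category D] [HasZeroObject D] [Preadditive D]
    [HasShift D ℤ] [∀ n : ℤ, (shiftFunctor D n).Additive] [Pretriangulated D]
    {wC : WeightStructure C} {wD : WeightStructure D} {F : C ⥤ D}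

lemma heart_map (hF : WeightExact wC wD F) {X : C} (h : wC.heart X) : wD.heart (F.obj X) :=
  ⟨hF.1 X h.1, hF.2 X h.2⟩

variable [F.CommShift ℤ]

lemma leW_map (hF : WeightExact wC wD F) {a : ℤ} {X : C} (h : wC.leW a X) :
    wD.leW a (F.obj X) :=
  wD.le_iso ((F.commShiftIso (-a)).app X) (hF.1 _ h)

lemma geW_map (hF : WeightExact wC wD F) {b : ℤ} {X : C} (h : wC.geW b X) :
    wD.geW b (F.obj X) :=
  wD.ge_iso ((F.commShiftIso (-b)).app X) (hF.2 _ h)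

lemma withoutWeights_map [F.IsTriangulated] (hF : WeightExact wC wD F) {m n : ℤ} {X : C}
    (h : wC.WithoutWeights m n X) : wD.WithoutWeights m n (F.obj X) := by
  obtain ⟨A, B, f, g, k, hT, hA, hB⟩ := h
  exact ⟨F.obj A, F.obj B, F.map f, F.map g, F.map k ≫ (F.commShiftIso (1 : ℤ)).hom.app A,
    F.map_distinguished _ hT, hF.leW_map hA, hF.geW_map hB⟩

end WeightExact

/-- **Proposition 2O, abstract form.** Let `g_* : C → D` and `g^* : D → C` be weight-exact
exact functors between idempotent-complete pretriangulated categories with weight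
structures, together with natural transformations `η : id → g^* g_*` and
`ε : g^* g_* → id` with `ε ∘ η = id` (so every `N` is naturally a direct factor of
`g^* g_* N`). Then `g_*` detects weights. -/
theorem direct_image_weight_conservative
    {C : Type*} [Category C] [HasZeroObject C] [Preadditive C]
    [HasShift C ℤ] [∀ n : ℤ, (shiftFunctor C n).Additive] [Pretriangulated C]
    [IsIdempotentComplete C]
    {D : Type*} [Category D] [HasZeroObject D] [Preadditive D]
    [HasShift D ℤ] [∀ n : ℤ, (shiftFunctor D n).Additive] [Pretriangulated D]
    [IsIdempotentComplete D]
    (wC : WeightStructure C) (wD : WeightStructure D)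
    (gst : C ⥤ D) (gs : D ⥤ C)
    [gst.CommShift ℤ] [gst.IsTriangulated] [gs.CommShift ℤ] [gs.IsTriangulated]
    (hgst : WeightExact wC wD gst) (hgs : WeightExact wD wC gs)
    (η : 𝟭 C ⟶ gst ⋙ gs) (ε : gst ⋙ gs ⟶ 𝟭 C) (hηε : η ≫ ε = 𝟙 (𝟭 C))
    (N : C) (α β : ℤ) (hαβ : α ≤ β) :
    (wC.heart N ↔ wD.heart (gst.obj N)) ∧
    (wC.leW α N ↔ wD.leW α (gst.obj N)) ∧
    (wC.geW β N ↔ wD.geW β (gst.obj N)) ∧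
    (wC.WithoutWeights α β N ↔ wD.WithoutWeights α β (gst.obj N)) := by
  let hN : Retract N (gs.obj (gst.obj N)) :=
    ⟨η.app N, ε.app N, by simpa using NatTrans.congr_app hηε N⟩
  exact ⟨⟨hgst.heart_map, fun h => wC.heart_of_retract hN (hgs.heart_map h)⟩,
    ⟨hgst.leW_map, fun h => wC.leW_of_retract hN (hgs.leW_map h)⟩,
    ⟨hgst.geW_map, fun h => wC.geW_of_retract hN (hgs.geW_map h)⟩,
    ⟨hgst.withoutWeights_map,
      fun h => WeightStructure.WithoutWeights.of_retract hαβ hN (hgs.withoutWeights_map h)⟩⟩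
end
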